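/- Let R be a commutative ring and let A be a formal power series over R with constant coefficient 1 such that N_i · (coefficient of X^i in A) = 0 for every i ≥ 1. Then A is invertible in R⟦X⟧, and its inverse B satisfies N_i · (coefficient of X^i in B) = 0 for every i ≥ 1. -/

import Mathlib

/-!
Writing `A = 1 + a₁X + a₂X² + ⋯` and `A⁻¹ = 1 + b₁X + ⋯`, the relation `A * A⁻¹ = 1` gives
`bᵢ = -(aᵢ + ∑_{j,k ≥ 1, j+k=i} aⱼ bₖ)`, so by strong induction it suffices that `N i` kills
each `aⱼ bₖ`. That product is killed by `gcd (N j) (N k)`, which divides `N (j + k)`. Indeed,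
for `t ≠ 0`, `v_p (N t) = [p = 2] + [2 ∣ t ∧ (p - 1) ∣ t] (v_p t + 1)`, and both conditions,
as well as the bound `min (v_p j) (v_p k) ≤ v_p (j + k)`, pass from `j, k` to `j + k`.
-/

/-- For `t ∈ ℕ`: `N 0 = 0`; `N t = 2` for odd `t`;
`N t = 2 * ∏_{p prime, (p-1) ∣ t} p^(v_p(t)+1)` for even positive `t`.
(Any prime `p` with `(p-1) ∣ t` satisfies `p ≤ t + 1 < t + 2`.) -/
def Npaper (t : ℕ) : ℕ :=
  if t = 0 then 0
  else if t % 2 = 1 then 2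
  else 2 * ∏ p ∈ Finset.filter (fun p => p.Prime ∧ (p - 1) ∣ t) (Finset.range (t + 2)),
      p ^ (t.factorization p + 1)

lemma Nat.factorization_prod_prime_pow_apply {S : Finset ℕ} (hS : ∀ p ∈ S, p.Prime)
    (e : ℕ → ℕ) (q : ℕ) :
    (∏ p ∈ S, p ^ e p).factorization q = if q ∈ S then e q else 0 := by
  rw [Nat.factorization_prod fun p hp => pow_ne_zero _ (hS p hp).ne_zero,
    Finsupp.finsetSum_apply, Finset.sum_congr rfl fun p hp => by
      rw [(hS p hp).factorization_pow, Finsupp.single_apply], Finset.sum_ite_eq']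

lemma Nat.min_factorization_le_factorization_add {q : ℕ} (hq : q.Prime) (j k : ℕ) :
    min (j.factorization q) (k.factorization q) ≤ (j + k).factorization q := by
  rcases Nat.eq_zero_or_pos (j + k) with hjk | hjk
  · obtain ⟨rfl, rfl⟩ : j = 0 ∧ k = 0 := by omega
    simp
  have hdj := (pow_dvd_pow q (min_le_left (j.factorization q) (k.factorization q))).trans
    (Nat.ordProj_dvd j q)
  have hdk := (pow_dvd_pow q (min_le_right (j.factorization q) (k.factorization q))).trans
    (Nat.ordProj_dvd k q)
  exact (hq.pow_dvd_iff_le_factorization hjk.ne').mp (dvd_add hdj hdk)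

lemma Npaper_of_odd {t : ℕ} (ht : t % 2 = 1) : Npaper t = 2 := by
  simp [Npaper, ht, show t ≠ 0 by omega]

/-- For `q` odd, `(q - 1) ∣ t` already forces `t` to be even; the condition `2 ∣ t` only
matters at `q = 2`. -/
lemma Npaper_factorization {t : ℕ} (ht : t ≠ 0) {q : ℕ} (hq : q.Prime) :
    (Npaper t).factorization q =
      (if q = 2 then 1 else 0) + if 2 ∣ t ∧ (q - 1) ∣ t then t.factorization q + 1 else 0 := by
  have h2 : (2 : ℕ).factorization q = if q = 2 then 1 else 0 := by
    simp [Nat.prime_two.factorization, Finsupp.single_apply, eq_comm]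
  rcases Nat.mod_two_eq_zero_or_one t with heven | hodd
  · set S := Finset.filter (fun p => p.Prime ∧ (p - 1) ∣ t) (Finset.range (t + 2))
    have hS : ∀ p ∈ S, p.Prime := fun p hp => (Finset.mem_filter.1 hp).2.1
    have hqS : q ∈ S ↔ (q - 1) ∣ t := by
      refine ⟨fun h => (Finset.mem_filter.1 h).2.2, fun hd => ?_⟩
      have := Nat.le_of_dvd (Nat.pos_of_ne_zero ht) hd
      simp only [S, Finset.mem_filter, Finset.mem_range]
      exact ⟨by omega, hq, hd⟩
    have hN : Npaper t = 2 * ∏ p ∈ S, p ^ (t.factorization p + 1) := by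
      simp [Npaper, ht, heven, S]
    rw [hN, Nat.factorization_mul two_ne_zero (Finset.prod_ne_zero_iff.2 fun p hp =>
      pow_ne_zero _ (hS p hp).ne_zero), Finsupp.add_apply, h2,
      Nat.factorization_prod_prime_pow_apply hS]
    simp only [hqS, Nat.dvd_of_mod_eq_zero heven, true_and]
  · have hnd : ¬ 2 ∣ t := by omega
    simp only [Npaper_of_odd hodd, h2, hnd, false_and, if_false, add_zero]

lemma Npaper_ne_zero {t : ℕ} (ht : t ≠ 0) : Npaper t ≠ 0 := by
  intro h
  have := congrArg (fun n => n.factorization 2) h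
  simp [Npaper_factorization ht Nat.prime_two] at this

lemma gcd_Npaper_dvd_Npaper_add {j k : ℕ} (hj : j ≠ 0) (hk : k ≠ 0) :
    Nat.gcd (Npaper j) (Npaper k) ∣ Npaper (j + k) := by
  rw [← Nat.factorization_le_iff_dvd (Nat.gcd_ne_zero_left (Npaper_ne_zero hj))
    (Npaper_ne_zero (by omega)), Nat.factorization_gcd (Npaper_ne_zero hj) (Npaper_ne_zero hk)]
  intro q
  by_cases hq : q.Prime
  · rw [Finsupp.inf_apply, Npaper_factorization hj hq, Npaper_factorization hk hq,
      Npaper_factorization (by omega) hq]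
    have := Nat.min_factorization_le_factorization_add hq j k
    by_cases hcj : 2 ∣ j ∧ (q - 1) ∣ j <;> by_cases hck : 2 ∣ k ∧ (q - 1) ∣ k
    · have hcjk : 2 ∣ j + k ∧ (q - 1) ∣ j + k := ⟨dvd_add hcj.1 hck.1, dvd_add hcj.2 hck.2⟩
      simp only [if_pos hcj, if_pos hck, if_pos hcjk]
      omega
    all_goals simp only [hcj, hck, if_false]; split_ifs <;> omega
  · simp [Nat.factorization_eq_zero_of_not_prime _ hq]

section PowerSeries

open PowerSeries Finset

variable {R : Type*} [Semiring R]

lemma nsmul_mul_eq_zero_of_gcd_dvd {x y : R} {m n l : ℕ} (hx : m • x = 0) (hy : n • y = 0)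
    (h : m.gcd n ∣ l) : l • (x * y) = 0 := by
  obtain ⟨c, rfl⟩ := h
  rw [mul_nsmul, gcd_nsmul_eq_zero.2 ⟨by rw [← smul_mul_assoc, hx, zero_mul],
    by rw [← mul_smul_comm, hy, mul_zero]⟩, nsmul_zero]

lemma nsmul_coeff_mul_eq_nsmul_constantCoeff_mul {N : ℕ → ℕ}
    (hN : ∀ j k, j ≠ 0 → k ≠ 0 → (N j).gcd (N k) ∣ N (j + k)) {A B : R⟦X⟧} {i : ℕ}
    (hA : ∀ j, 1 ≤ j → N j • coeff j A = 0) (hB : ∀ k, 1 ≤ k → k < i → N k • coeff k B = 0) :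
    N i • coeff i (A * B) = N i • (constantCoeff A * coeff i B) := by
  have hmem : ((0 : ℕ), i) ∈ antidiagonal i := by simp
  rw [coeff_mul, smul_sum, ← add_sum_erase _ _ hmem, sum_eq_zero,
    add_zero, coeff_zero_eq_constantCoeff_apply]
  rintro ⟨j, k⟩ hjk
  obtain ⟨hne, hsum⟩ := mem_erase.1 hjk
  rw [HasAntidiagonal.mem_antidiagonal] at hsum
  have hj : j ≠ 0 := by rintro rfl; exact hne (by simp_all)
  subst hsum
  rcases Nat.eq_zero_or_pos k with rfl | hk
  · rw [add_zero, ← smul_mul_assoc, hA j (by omega), zero_mul]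
  · exact nsmul_mul_eq_zero_of_gcd_dvd (hA j (by omega)) (hB k hk (by omega))
      (hN j k hj hk.ne')

lemma nsmul_coeff_eq_zero_of_mul_eq_one {N : ℕ → ℕ}
    (hN : ∀ j k, j ≠ 0 → k ≠ 0 → (N j).gcd (N k) ∣ N (j + k)) {A B : R⟦X⟧}
    (hA0 : constantCoeff A = 1) (hA : ∀ j, 1 ≤ j → N j • coeff j A = 0) (hAB : A * B = 1) :
    ∀ i, 1 ≤ i → N i • coeff i B = 0 := by
  intro i hi
  induction i using Nat.strong_induction_on with
  | _ i ih =>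
    have := nsmul_coeff_mul_eq_nsmul_constantCoeff_mul hN hA fun k hk hki => ih k hki hk
    rwa [hAB, coeff_one, if_neg (by omega), smul_zero, hA0, one_mul, eq_comm] at this

end PowerSeries

/-- If `A ∈ R⟦X⟧` has constant coefficient `1` and `N i • coeff i A = 0` for all `i ≥ 1`,
then `A` is invertible and its inverse `B` satisfies `N i • coeff i B = 0` for all `i ≥ 1`. -/
theorem stmt_6 {R : Type*} [CommRing R] (A : PowerSeries R)
    (hA0 : PowerSeries.constantCoeff A = 1)
    (hA : ∀ i, 1 ≤ i → Npaper i • PowerSeries.coeff i A = 0) :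
    IsUnit A ∧ ∀ B : PowerSeries R, A * B = 1 →
      ∀ i, 1 ≤ i → Npaper i • PowerSeries.coeff i B = 0 :=
  ⟨PowerSeries.isUnit_iff_constantCoeff.2 (hA0 ▸ isUnit_one), fun _ hAB =>
    nsmul_coeff_eq_zero_of_mul_eq_one (fun _ _ => gcd_Npaper_dvd_Npaper_add) hA0 hA hAB⟩
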